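/- arXiv:2504.21591 — 4 statements merged into one kernel-verified Lean document; each statement's English description precedes it below -/
import Mathlib

section
/- Let E : ℝ^d → ℝ satisfy |∂_x^α E(x)| ≤ C (1+|x|)^{−(|α|+d−2)} for |α| = 0,1,2, and let f : ℝ^d → ℝ satisfy ‖(1+|x|)^d f‖_{L^∞} + ‖f‖_{L^1} < ∞. Then for |α| = 0,1, |(∂_x^α E ∗ f)(x)| ≤ C' (1+|x|)^{−(|α|+d−2)} ( ‖(1+|x|)^d f‖_{L^∞} + ‖f‖_{L^1} ) for all x ∈ ℝ^d. -/
/-!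
Split the convolution integral according to whether `‖x - y‖ ≤ ‖x‖ / 2`. Off this ball the kernel
is `≲ (1 + ‖x‖)^(-q)`, which comes out of the integral against `‖f‖_{L¹}`. On it `‖y‖ ≥ ‖x‖ / 2`,
so `|f y| ≲ M (1 + ‖x‖)^(-d)`, while in polar coordinates `(1 + ‖z‖)^(-q)` integrates over a ball
of radius `R` to `≲ (1 + R)^(d - q)` because `q ≤ d - 1`; the product is again `≲ (1 + ‖x‖)^(-q)`.
-/

open MeasureTheory Metric Set
open scoped Convolution

lemma setIntegral_Ioc_pow_mul_one_add_rpow_neg_le {N : ℕ} {q R : ℝ} (hN : 1 ≤ N)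
    (hq : q ≤ N - 1) (hR : 0 ≤ R) :
    ∫ r in Ioc 0 R, r ^ (N - 1) * (1 + r) ^ (-q) ≤ (1 + R) ^ (N - q) := by
  have hbound : ∀ r ∈ Ioc 0 R, r ^ (N - 1) * (1 + r) ^ (-q) ≤ (1 + R) ^ ((N : ℝ) - 1 - q) := by
    rintro r ⟨hr0, hrR⟩
    calc r ^ (N - 1) * (1 + r) ^ (-q) ≤ (1 + r) ^ (N - 1) * (1 + r) ^ (-q) := by
          gcongr; linarith
      _ = (1 + r) ^ ((N : ℝ) - 1 - q) := by
          rw [← Real.rpow_natCast, ← Real.rpow_add (by linarith), Nat.cast_sub hN]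
          ring_nf
      _ ≤ (1 + R) ^ ((N : ℝ) - 1 - q) := by gcongr
  calc ∫ r in Ioc 0 R, r ^ (N - 1) * (1 + r) ^ (-q)
      ≤ ∫ r in Ioc 0 R, (1 + R) ^ ((N : ℝ) - 1 - q) := by
        refine integral_mono_of_nonneg ?_ (integrableOn_const (by simp)) ?_
        · filter_upwards [ae_restrict_mem measurableSet_Ioc] with r hr
          have := hr.1.le
          positivity
        · exact ae_restrict_of_forall_mem measurableSet_Ioc hbound
    _ = R * (1 + R) ^ ((N : ℝ) - 1 - q) := by simp [hR]
    _ ≤ (1 + R) * (1 + R) ^ ((N : ℝ) - 1 - q) := by gcongr; linarith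
    _ = (1 + R) ^ (N - q) := by
        rw [← Real.rpow_one_add' (by linarith) (by linarith)]; ring_nf

lemma rpow_neg_le_two_pow_mul_rpow_neg {a t s : ℝ} {N : ℕ} (ha : 0 < a) (ht : a / 2 ≤ t)
    (hs : 0 ≤ s) (hsN : s ≤ N) : t ^ (-s) ≤ 2 ^ N * a ^ (-s) :=
  calc t ^ (-s) ≤ (a / 2) ^ (-s) := Real.rpow_le_rpow_of_nonpos (by positivity) ht (by linarith)
    _ = 2 ^ s * a ^ (-s) := by
      rw [Real.div_rpow ha.le zero_le_two, Real.rpow_neg zero_le_two, div_inv_eq_mul, mul_comm]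
    _ ≤ 2 ^ N * a ^ (-s) := by
      gcongr
      exact_mod_cast Real.rpow_le_rpow_of_exponent_le one_le_two hsN

section

variable {G E E' : Type*} [SeminormedAddCommGroup G] [SeminormedAddCommGroup E]
  [SeminormedAddCommGroup E'] {f : G → E} {g : G → E'} {N : ℕ} {q C M : ℝ}

lemma norm_mul_norm_le_far_add_near (hq0 : 0 ≤ q) (hqN : q ≤ N) (hC : 0 ≤ C) (hM : 0 ≤ M)
    (hg : ∀ z, ‖g z‖ ≤ C * (1 + ‖z‖) ^ (-q)) (hf : ∀ y, ‖f y‖ ≤ M * (1 + ‖y‖) ^ (-(N : ℝ)))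
    (x y : G) :
    ‖f y‖ * ‖g (x - y)‖ ≤ 2 ^ N * C * ((1 + ‖x‖) ^ (-q) * ‖f y‖ + M * (1 + ‖x‖) ^ (-(N : ℝ)) *
      (closedBall 0 (‖x‖ / 2)).indicator (fun z ↦ (1 + ‖z‖) ^ (-q)) (x - y)) := by
  have hx : 0 < 1 + ‖x‖ := by positivity
  have htri : ‖x‖ ≤ ‖x - y‖ + ‖y‖ := norm_le_norm_sub_add x y
  by_cases hnear : ‖x - y‖ ≤ ‖x‖ / 2
  · have hfy : ‖f y‖ ≤ M * (2 ^ N * (1 + ‖x‖) ^ (-(N : ℝ))) := (hf y).trans <| by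
      gcongr
      exact rpow_neg_le_two_pow_mul_rpow_neg hx (by linarith) (Nat.cast_nonneg N) le_rfl
    rw [indicator_of_mem (by simpa using hnear)]
    calc ‖f y‖ * ‖g (x - y)‖ ≤ M * (2 ^ N * (1 + ‖x‖) ^ (-(N : ℝ))) * (C * (1 + ‖x - y‖) ^ (-q)) :=
          mul_le_mul hfy (hg _) (norm_nonneg _) (by positivity)
      _ ≤ _ := by
        have : 0 ≤ 2 ^ N * C * ((1 + ‖x‖) ^ (-q) * ‖f y‖) := by positivity
        linarith
  · have hgxy : ‖g (x - y)‖ ≤ C * (2 ^ N * (1 + ‖x‖) ^ (-q)) := (hg _).trans <| by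
      gcongr
      exact rpow_neg_le_two_pow_mul_rpow_neg hx (by linarith) hq0 hqN
    rw [indicator_of_notMem (by simpa using hnear)]
    calc ‖f y‖ * ‖g (x - y)‖ ≤ ‖f y‖ * (C * (2 ^ N * (1 + ‖x‖) ^ (-q))) := by gcongr
      _ = _ := by ring

end

section

variable {V : Type*} [NormedAddCommGroup V] [NormedSpace ℝ V] [FiniteDimensional ℝ V]
  [MeasurableSpace V] [BorelSpace V] (μ : Measure V) [μ.IsAddHaarMeasure]

local notation "dim" => Module.finrank ℝ V

lemma setIntegral_closedBall_one_add_norm_rpow_neg_le [Nontrivial V] {q R : ℝ}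
    (hq : q ≤ dim - 1) (hR : 0 ≤ R) :
    ∫ z in closedBall (0 : V) R, (1 + ‖z‖) ^ (-q) ∂μ ≤
      dim * μ.real (ball 0 1) * (1 + R) ^ (dim - q) := by
  have hpolar := integral_fun_norm_addHaar μ ((Iic R).indicator fun r ↦ (1 + r) ^ (-q))
  have hball : ∫ z in closedBall (0 : V) R, (1 + ‖z‖) ^ (-q) ∂μ =
      ∫ z, (Iic R).indicator (fun r ↦ (1 + r) ^ (-q)) ‖z‖ ∂μ := by
    rw [← integral_indicator measurableSet_closedBall]
    congr 1 with z
    by_cases hz : ‖z‖ ≤ R <;> simp [indicator, hz]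
  have hradial : ∫ r in Ioi 0, r ^ (dim - 1) • (Iic R).indicator (fun r ↦ (1 + r) ^ (-q)) r =
      ∫ r in Ioc 0 R, r ^ (dim - 1) * (1 + r) ^ (-q) := by
    rw [← indicator_smul, setIntegral_indicator measurableSet_Iic, Ioi_inter_Iic]
    simp only [smul_eq_mul]
  rw [hball, hpolar, hradial, nsmul_eq_mul, smul_eq_mul, mul_assoc]
  gcongr
  exact setIntegral_Ioc_pow_mul_one_add_rpow_neg_le Module.finrank_pos hq hR

variable {E E' F : Type*} [NormedAddCommGroup E] [NormedSpace ℝ E] [NormedAddCommGroup E']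
  [NormedSpace ℝ E'] [NormedAddCommGroup F] [NormedSpace ℝ F]

theorem norm_convolution_le_of_decay [Nontrivial V] (L : E →L[ℝ] E' →L[ℝ] F) {f : V → E}
    {g : V → E'} {q C M : ℝ} (hq0 : 0 ≤ q) (hq : q ≤ dim - 1) (hC : 0 ≤ C) (hM : 0 ≤ M)
    (hg : ∀ z, ‖g z‖ ≤ C * (1 + ‖z‖) ^ (-q))
    (hf : ∀ y, ‖f y‖ ≤ M * (1 + ‖y‖) ^ (-(dim : ℝ))) (hfi : Integrable f μ) (x : V) :
    ‖(f ⋆[L, μ] g) x‖ ≤ ‖L‖ * (2 ^ dim * C * (1 + dim * μ.real (ball 0 1))) *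
      (1 + ‖x‖) ^ (-q) * (M + ∫ y, ‖f y‖ ∂μ) := by
  set B := μ.real (ball (0 : V) 1)
  set I := ∫ y, ‖f y‖ ∂μ
  set K := 2 ^ dim * C
  set w := 1 + ‖x‖
  have hw : 0 < w := by positivity
  set h := (closedBall (0 : V) (‖x‖ / 2)).indicator fun z ↦ (1 + ‖z‖) ^ (-q)
  have hh : Integrable h μ := by
    refine (integrable_indicator_iff measurableSet_closedBall).2 ?_
    exact ((continuous_const.add continuous_norm).rpow_const fun z ↦
      Or.inl (by positivity : 0 < 1 + ‖z‖).ne').continuousOn.integrableOn_compact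
      (isCompact_closedBall _ _)
  have hnear_le : ∫ y, h (x - y) ∂μ ≤ dim * B * w ^ (dim - q) := by
    rw [integral_sub_left_eq_self, integral_indicator measurableSet_closedBall]
    refine (setIntegral_closedBall_one_add_norm_rpow_neg_le μ hq (by positivity)).trans ?_
    gcongr
    · linarith
    · linarith [norm_nonneg x]
  have hfar_int : Integrable (fun y ↦ w ^ (-q) * ‖f y‖) μ := hfi.norm.const_mul _
  have hnear_int : Integrable (fun y ↦ M * w ^ (-(dim : ℝ)) * h (x - y)) μ :=
    (hh.comp_sub_left x).const_mul _
  calc ‖(f ⋆[L, μ] g) x‖ ≤ ∫ y, ‖L (f y) (g (x - y))‖ ∂μ := norm_integral_le_integral_norm _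
    _ ≤ ∫ y, ‖L‖ * K * (w ^ (-q) * ‖f y‖ + M * w ^ (-(dim : ℝ)) * h (x - y)) ∂μ := by
      refine integral_mono_of_nonneg (ae_of_all _ fun _ ↦ norm_nonneg _)
        ((hfar_int.add hnear_int).const_mul _) (ae_of_all _ fun y ↦ (L.le_opNorm₂ _ _).trans ?_)
      simp only [mul_assoc ‖L‖]
      exact mul_le_mul_of_nonneg_left
        (norm_mul_norm_le_far_add_near hq0 (by linarith) hC hM hg hf x y) (norm_nonneg L)
    _ = ‖L‖ * K * (w ^ (-q) * I + M * w ^ (-(dim : ℝ)) * ∫ y, h (x - y) ∂μ) := by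
      rw [integral_const_mul, integral_add hfar_int hnear_int, integral_const_mul,
        integral_const_mul]
    _ ≤ ‖L‖ * K * (w ^ (-q) * I + M * w ^ (-(dim : ℝ)) * (dim * B * w ^ (dim - q))) := by
      gcongr
    _ = ‖L‖ * K * w ^ (-q) * (I + dim * B * M) := by
      have hpow : w ^ (-(dim : ℝ)) * w ^ ((dim : ℝ) - q) = w ^ (-q) := by
        rw [← Real.rpow_add hw]; ring_nf
      linear_combination (‖L‖ * K * M * dim * B) * hpow
    _ ≤ ‖L‖ * K * w ^ (-q) * ((1 + dim * B) * (M + I)) := by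
      have hI : 0 ≤ I := integral_nonneg fun _ ↦ norm_nonneg _
      have hdB : 0 ≤ dim * B := by positivity
      gcongr
      nlinarith [mul_nonneg hdB hI]
    _ = _ := by ring

end

theorem convolution_kernel_decay_general (d : ℕ) (hd : 3 ≤ d)
    (E : EuclideanSpace ℝ (Fin d) → ℝ) (C : ℝ) (hC : 0 < C)
    (hEbound : ∀ n ≤ 2, ∀ x : EuclideanSpace ℝ (Fin d),
      ‖iteratedFDeriv ℝ n E x‖ ≤ C * (1 + ‖x‖) ^ (-((n : ℝ) + d - 2))) :
    ∃ C' : ℝ, 0 < C' ∧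
      ∀ (f : EuclideanSpace ℝ (Fin d) → ℝ) (M : ℝ),
        Integrable f volume →
        (∀ x, |f x| ≤ M * (1 + ‖x‖) ^ (-(d : ℝ))) →
        ∀ n ≤ 1, ∀ x : EuclideanSpace ℝ (Fin d),
          ‖MeasureTheory.convolution f (iteratedFDeriv ℝ n E)
              (ContinuousLinearMap.lsmul ℝ ℝ) volume x‖ ≤
            C' * (1 + ‖x‖) ^ (-((n : ℝ) + d - 2)) * (M + ∫ y, |f y|) := by
  have : Nonempty (Fin d) := ⟨⟨0, by omega⟩⟩
  have hdim : Module.finrank ℝ (EuclideanSpace ℝ (Fin d)) = d := finrank_euclideanSpace_fin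
  refine ⟨2 ^ d * C * (1 + d * volume.real (ball (0 : EuclideanSpace ℝ (Fin d)) 1)),
    by positivity, fun f M hf hfM n hn x ↦ ?_⟩
  have hM : 0 ≤ M := by simpa using (abs_nonneg _).trans (hfM 0)
  have hd' : (3 : ℝ) ≤ d := by exact_mod_cast hd
  have hn' : (n : ℝ) ≤ 1 := by exact_mod_cast hn
  have hconv := norm_convolution_le_of_decay volume (ContinuousLinearMap.lsmul ℝ ℝ)
    (by linarith [Nat.cast_nonneg (α := ℝ) n]) (by rw [hdim]; linarith) hC.le hM
    (hEbound n (by omega)) (fun y ↦ by rw [hdim]; exact hfM y) hf x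
  rw [hdim] at hconv
  calc _ ≤ _ := hconv
    _ ≤ 1 * _ * _ * _ := by gcongr; exact ContinuousLinearMap.opNorm_lsmul_le
    _ = _ := by rw [one_mul]; rfl

/-- Convolution decay estimate: if `|∂^α E(x)| ≤ C(1+|x|)^{−(|α|+d−2)}` for `|α| ≤ 2`
and `|f(x)| ≤ M(1+|x|)^{−d}` with `f ∈ L¹`, then for `|α| ≤ 1`
`|(∂^α E ∗ f)(x)| ≤ C'(1+|x|)^{−(|α|+d−2)} (M + ‖f‖_{L¹})`. -/
theorem convolution_kernel_decay (d : ℕ) (hd : 3 ≤ d)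
    (E : EuclideanSpace ℝ (Fin d) → ℝ) (C : ℝ) (hC : 0 < C)
    (hE : ContDiff ℝ 2 E)
    (hEbound : ∀ n ≤ 2, ∀ x : EuclideanSpace ℝ (Fin d),
      ‖iteratedFDeriv ℝ n E x‖ ≤ C * (1 + ‖x‖) ^ (-((n : ℝ) + d - 2))) :
    ∃ C' : ℝ, 0 < C' ∧
      ∀ (f : EuclideanSpace ℝ (Fin d) → ℝ) (M : ℝ),
        Integrable f volume →
        (∀ x, |f x| ≤ M * (1 + ‖x‖) ^ (-(d : ℝ))) →
        ∀ n ≤ 1, ∀ x : EuclideanSpace ℝ (Fin d),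
          ‖MeasureTheory.convolution f (iteratedFDeriv ℝ n E)
              (ContinuousLinearMap.lsmul ℝ ℝ) volume x‖ ≤
            C' * (1 + ‖x‖) ^ (-((n : ℝ) + d - 2)) * (M + ∫ y, |f y|) :=
  convolution_kernel_decay_general d hd E C hC hEbound
end

section
/- Let E : ℝ^d → ℝ satisfy |∂_x^α E(x)| ≤ C(1+|x|)^{−(|α|+d−1)} for |α| = 0,1, and assume f satisfies ‖(1+|x|)^d f‖_{L^∞} < ∞. Then for |α| = 0,1 and |x| ≥ 2, |(∂_x^α E ∗ f)(x)| ≤ C' (log|x|) (1+|x|)^{−(|α|+d−1)} ‖(1+|x|)^d f‖_{L^∞}. -/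
open MeasureTheory Set
open scoped ENNReal

/-!
With `u = 1 + ‖t‖`, `v = 1 + ‖x - t‖` and `m = (1 + ‖x‖) / 2` one has `m ≤ max u v`, hence
`u ^ (-d) * v ^ (-a) ≤ u ^ (-d) * max u m ^ (-a) + max v m ^ (-d) * v ^ (-a)`: the kernel is
dominated by two radial profiles, centred at `0` and at `x`. In polar coordinates, with radial
variable `u = 1 + r` and weight `u ^ (d - 1)`, each profile integrates to at most
`m ^ (-a) * (log m + 1 / a)`. For `u ≤ m` the integrand is at most `m ^ (-a) / u`, whose integral
is the logarithmic loss caused by the critical decay `(1 + ‖t‖) ^ (-d)` of `f`; the tail `u > m`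
contributes `m ^ (-a) / a`.
-/

theorem Real.rpow_neg_mul_rpow_neg_le_add {u v m p q : ℝ} (hu : 0 < u) (hv : 0 < v) (hp : 0 ≤ p)
    (hq : 0 ≤ q) (hm : m ≤ max u v) :
    u ^ (-p) * v ^ (-q) ≤ u ^ (-p) * max u m ^ (-q) + max v m ^ (-p) * v ^ (-q) := by
  rcases le_total u v with huv | hvu
  · have hvq : v ^ (-q) ≤ max u m ^ (-q) :=
      Real.rpow_le_rpow_of_nonpos (lt_max_of_lt_left hu) (max_le huv (max_eq_right huv ▸ hm))
        (by linarith)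
    have : 0 ≤ max v m ^ (-p) * v ^ (-q) := by positivity
    nlinarith [Real.rpow_nonneg hu.le (-p)]
  · have hup : u ^ (-p) ≤ max v m ^ (-p) :=
      Real.rpow_le_rpow_of_nonpos (lt_max_of_lt_left hv) (max_le hvu (max_eq_left hvu ▸ hm))
        (by linarith)
    have : 0 ≤ u ^ (-p) * max u m ^ (-q) := by positivity
    nlinarith [Real.rpow_nonneg hv.le (-q)]

theorem lintegral_Ioc_one_inv {m : ℝ} (hm : 1 ≤ m) :
    ∫⁻ u in Ioc 1 m, ENNReal.ofReal u⁻¹ = ENNReal.ofReal (Real.log m) := by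
  have hint : IntegrableOn (fun u : ℝ => u⁻¹) (Ioc 1 m) :=
    (continuousOn_inv₀.mono fun u hu => (zero_lt_one.trans_le hu.1).ne').integrableOn_Icc.mono_set
      Ioc_subset_Icc_self
  rw [← ofReal_integral_eq_lintegral_ofReal hint, ← intervalIntegral.integral_of_le hm,
    integral_inv_of_pos one_pos (by linarith), div_one]
  filter_upwards [ae_restrict_mem measurableSet_Ioc] with u hu
  exact inv_nonneg.2 (zero_le_one.trans hu.1.le)

theorem lintegral_Ioi_rpow_neg_sub_one {m s : ℝ} (hm : 0 < m) (hs : 0 < s) :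
    ∫⁻ u in Ioi m, ENNReal.ofReal (u ^ (-s - 1)) = ENNReal.ofReal (m ^ (-s) / s) := by
  have hlt : -s - 1 < -1 := by linarith
  rw [← ofReal_integral_eq_lintegral_ofReal (integrableOn_Ioi_rpow_of_lt hlt hm),
    integral_Ioi_rpow_of_lt hlt hm, sub_add_cancel, neg_div_neg_eq]
  filter_upwards [ae_restrict_mem measurableSet_Ioi] with u hu
  exact Real.rpow_nonneg (hm.trans hu).le _

theorem lintegral_Ioi_one_rpow_mul_max_rpow_le {n p q m : ℝ} (hp : p ≤ n) (hs : n < p + q)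
    (hm : 1 ≤ m) :
    ∫⁻ u in Ioi 1, ENNReal.ofReal (u ^ (n - 1) * (u ^ (-p) * max u m ^ (-q))) ≤
      ENNReal.ofReal (m ^ (n - p - q) * (Real.log m + 1 / (p + q - n))) := by
  have hm0 : 0 < m := zero_lt_one.trans_le hm
  have hinner : ∀ u ∈ Ioc 1 m, u ^ (n - 1) * (u ^ (-p) * max u m ^ (-q)) ≤
      m ^ (n - p - q) * u⁻¹ := by
    rintro u ⟨hu1, hum⟩
    have hu : 0 < u := zero_lt_one.trans hu1
    calc u ^ (n - 1) * (u ^ (-p) * max u m ^ (-q)) = u ^ (n - p) * m ^ (-q) * u⁻¹ := by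
          rw [max_eq_right hum, ← Real.rpow_neg_one, mul_left_comm, ← mul_assoc,
            ← Real.rpow_add hu, mul_right_comm, ← Real.rpow_add hu]
          ring_nf
      _ ≤ m ^ (n - p) * m ^ (-q) * u⁻¹ := by gcongr
      _ = m ^ (n - p - q) * u⁻¹ := by rw [← Real.rpow_add hm0, ← sub_eq_add_neg]
  have houter : ∀ u ∈ Ioi m, u ^ (n - 1) * (u ^ (-p) * max u m ^ (-q)) =
      u ^ (-(p + q - n) - 1) := by
    intro u hmu
    have hu : 0 < u := hm0.trans hmu
    rw [max_eq_left hmu.le, ← Real.rpow_add hu, ← Real.rpow_add hu]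
    ring_nf
  calc ∫⁻ u in Ioi 1, ENNReal.ofReal (u ^ (n - 1) * (u ^ (-p) * max u m ^ (-q)))
      ≤ (∫⁻ u in Ioc 1 m, ENNReal.ofReal (u ^ (n - 1) * (u ^ (-p) * max u m ^ (-q)))) +
        ∫⁻ u in Ioi m, ENNReal.ofReal (u ^ (n - 1) * (u ^ (-p) * max u m ^ (-q))) := by
        rw [← Ioc_union_Ioi_eq_Ioi hm]
        exact lintegral_union_le _ _ _
    _ ≤ (∫⁻ u in Ioc 1 m, ENNReal.ofReal (m ^ (n - p - q)) * ENNReal.ofReal u⁻¹) +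
        ∫⁻ u in Ioi m, ENNReal.ofReal (u ^ (-(p + q - n) - 1)) := by
        gcongr ?_ + ?_
        · refine setLIntegral_mono (by fun_prop) fun u hu => ?_
          rw [← ENNReal.ofReal_mul (by positivity)]
          exact ENNReal.ofReal_le_ofReal (hinner u hu)
        · exact (setLIntegral_congr_fun measurableSet_Ioi fun u hu => by rw [houter u hu]).le
    _ = ENNReal.ofReal (m ^ (n - p - q) * (Real.log m + 1 / (p + q - n))) := by
        rw [lintegral_const_mul' _ _ ENNReal.ofReal_ne_top, lintegral_Ioc_one_inv hm,
          lintegral_Ioi_rpow_neg_sub_one hm0 (by linarith), ← ENNReal.ofReal_mul (by positivity),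
          ← ENNReal.ofReal_add (mul_nonneg (by positivity) (Real.log_nonneg hm))
            (div_nonneg (by positivity) (by linarith))]
        congr 1
        rw [show -(p + q - n) = n - p - q by ring]
        ring

theorem half_one_add_rpow_neg_mul_le {R a : ℝ} {n : ℕ} (hR : 2 ≤ R) (ha : 1 ≤ a) (han : a ≤ n) :
    2 * (((1 + R) / 2) ^ (-a) * (Real.log ((1 + R) / 2) + 1 / a)) ≤
      2 ^ (n + 3) * Real.log R * (1 + R) ^ (-a) := by
  have hlogR : 1 / 2 ≤ Real.log R :=
    (Real.log_two_gt_d9.le.trans' (by norm_num)).trans (Real.log_le_log two_pos hR)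
  have hlog : Real.log ((1 + R) / 2) + 1 / a ≤ 4 * Real.log R := by
    have h1 : Real.log ((1 + R) / 2) ≤ Real.log (R ^ 2) :=
      Real.log_le_log (by positivity) (by nlinarith)
    have h2 : 1 / a ≤ 1 := by rw [div_le_one (by linarith)]; exact ha
    rw [Real.log_pow] at h1
    push_cast at h1
    linarith
  have hpow : ((1 + R) / 2) ^ (-a) ≤ 2 ^ n * (1 + R) ^ (-a) := by
    rw [Real.div_rpow (by positivity) zero_le_two, Real.rpow_neg zero_le_two, div_eq_mul_inv,
      inv_inv, mul_comm]
    gcongr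
    exact (Real.rpow_le_rpow_of_exponent_le one_le_two han).trans_eq (Real.rpow_natCast 2 n)
  calc 2 * (((1 + R) / 2) ^ (-a) * (Real.log ((1 + R) / 2) + 1 / a))
      ≤ 2 * ((2 ^ n * (1 + R) ^ (-a)) * (4 * Real.log R)) := by
        have : 0 ≤ Real.log ((1 + R) / 2) + 1 / a :=
          add_nonneg (Real.log_nonneg (by linarith)) (by positivity)
        gcongr
    _ = 2 ^ (n + 3) * Real.log R * (1 + R) ^ (-a) := by ring

namespace MeasureTheory

variable {E : Type*} [NormedAddCommGroup E] [NormedSpace ℝ E] [Nontrivial E] [FiniteDimensional ℝ E]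
  [MeasurableSpace E] [BorelSpace E] (μ : Measure E) [μ.IsAddHaarMeasure]

theorem lintegral_fun_norm_addHaar {g : ℝ → ℝ≥0∞} (hg : Measurable g) :
    ∫⁻ x, g ‖x‖ ∂μ =
      μ.toSphere univ * ∫⁻ r in Ioi 0, ENNReal.ofReal (r ^ (Module.finrank ℝ E - 1)) * g r := by
  calc ∫⁻ x, g ‖x‖ ∂μ = ∫⁻ x : ({0}ᶜ : Set E), g ‖(x : E)‖ ∂μ.comap Subtype.val := by
        rw [lintegral_subtype_comap (measurableSet_singleton 0).compl (fun x => g ‖x‖),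
          restrict_compl_singleton]
    _ = ∫⁻ p, g p.2 ∂μ.toSphere.prod (Measure.volumeIoiPow (Module.finrank ℝ E - 1)) := by
        rw [← μ.measurePreserving_homeomorphUnitSphereProd.lintegral_comp_emb
          (Homeomorph.measurableEmbedding _)]
        simp [homeomorphUnitSphereProd_apply_snd_coe]
    _ = μ.toSphere univ * ∫⁻ r, g r ∂Measure.volumeIoiPow (Module.finrank ℝ E - 1) := by
        rw [lintegral_prod (fun p : _ × Ioi (0 : ℝ) => g p.2)
          (hg.comp (measurable_subtype_coe.comp measurable_snd)).aemeasurable]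
        simp only [lintegral_const, mul_comm]
    _ = _ := by
        rw [Measure.volumeIoiPow, lintegral_withDensity_eq_lintegral_mul _
          (measurable_subtype_coe.pow_const _).ennreal_ofReal (g := fun r : Ioi (0 : ℝ) => g r)
          (hg.comp measurable_subtype_coe),
          ← lintegral_subtype_comap measurableSet_Ioi (fun r => ENNReal.ofReal (r ^ _) * g r)]
        rfl

theorem lintegral_fun_one_add_norm_le {h : ℝ → ℝ≥0∞} (hh : Measurable h) :
    ∫⁻ x, h (1 + ‖x‖) ∂μ ≤
      μ.toSphere univ *
        ∫⁻ u in Ioi 1, ENNReal.ofReal (u ^ ((Module.finrank ℝ E : ℝ) - 1)) * h u := by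
  have hdim : 1 ≤ Module.finrank ℝ E := Module.finrank_pos
  rw [lintegral_fun_norm_addHaar μ (g := fun r => h (1 + r)) (hh.comp (measurable_const_add 1))]
  gcongr _ * ?_
  calc ∫⁻ r in Ioi 0, ENNReal.ofReal (r ^ (Module.finrank ℝ E - 1)) * h (1 + r)
      ≤ ∫⁻ r in Ioi 0, ENNReal.ofReal ((1 + r) ^ ((Module.finrank ℝ E : ℝ) - 1)) * h (1 + r) := by
        refine setLIntegral_mono' measurableSet_Ioi fun r (hr : 0 < r) => ?_
        gcongr
        rw [← Nat.cast_pred hdim, Real.rpow_natCast]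
        gcongr
        linarith
    _ = ∫⁻ u in Ioi 1, ENNReal.ofReal (u ^ ((Module.finrank ℝ E : ℝ) - 1)) * h u := by
        rw [(measurePreserving_add_left volume (1 : ℝ)).setLIntegral_comp_emb
          (measurableEmbedding_addLeft 1) (fun u => ENNReal.ofReal (u ^ _) * h u),
          image_const_add_Ioi, add_zero]

theorem lintegral_one_add_norm_rpow_mul_max_rpow_le {p q m : ℝ}
    (hp : p ≤ Module.finrank ℝ E) (hs : Module.finrank ℝ E < p + q) (hm : 1 ≤ m) :
    ∫⁻ x, ENNReal.ofReal ((1 + ‖x‖) ^ (-p) * max (1 + ‖x‖) m ^ (-q)) ∂μ ≤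
      μ.toSphere univ * ENNReal.ofReal (m ^ ((Module.finrank ℝ E : ℝ) - p - q) *
        (Real.log m + 1 / (p + q - Module.finrank ℝ E))) := by
  refine (lintegral_fun_one_add_norm_le μ (h := fun u => ENNReal.ofReal (u ^ (-p) * max u m ^ (-q)))
    (by fun_prop)).trans ?_
  gcongr _ * ?_
  refine le_trans (le_of_eq ?_) (lintegral_Ioi_one_rpow_mul_max_rpow_le hp hs hm)
  refine setLIntegral_congr_fun measurableSet_Ioi fun u (hu : 1 < u) => ?_
  rw [← ENNReal.ofReal_mul (Real.rpow_nonneg (zero_le_one.trans hu.le) _)]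

theorem lintegral_one_add_norm_rpow_mul_one_add_norm_sub_rpow_le {a : ℝ} (ha : 1 ≤ a)
    (han : a ≤ Module.finrank ℝ E) {x : E} (hx : 2 ≤ ‖x‖) :
    ∫⁻ t, ENNReal.ofReal ((1 + ‖t‖) ^ (-(Module.finrank ℝ E : ℝ)) * (1 + ‖x - t‖) ^ (-a)) ∂μ ≤
      ENNReal.ofReal (2 ^ (Module.finrank ℝ E + 3) * μ.toSphere.real univ * Real.log ‖x‖ *
        (1 + ‖x‖) ^ (-a)) := by
  set n : ℕ := Module.finrank ℝ E
  set m : ℝ := (1 + ‖x‖) / 2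
  have hm : 1 ≤ m := by simp only [m]; linarith
  set φ : ℝ → ℝ≥0∞ := fun r => ENNReal.ofReal ((1 + r) ^ (-(n : ℝ)) * max (1 + r) m ^ (-a))
  set ψ : ℝ → ℝ≥0∞ := fun r => ENNReal.ofReal ((1 + r) ^ (-a) * max (1 + r) m ^ (-(n : ℝ)))
  have hsplit : ∀ t, ENNReal.ofReal ((1 + ‖t‖) ^ (-(n : ℝ)) * (1 + ‖x - t‖) ^ (-a)) ≤
      φ ‖t‖ + ψ ‖x - t‖ := by
    intro t
    have hmax : m ≤ max (1 + ‖t‖) (1 + ‖x - t‖) := by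
      have := norm_le_norm_add_norm_sub' x t
      simp only [m]
      linarith [le_max_left (1 + ‖t‖) (1 + ‖x - t‖), le_max_right (1 + ‖t‖) (1 + ‖x - t‖)]
    have key := Real.rpow_neg_mul_rpow_neg_le_add (p := n) (q := a) (by positivity) (by positivity)
      (Nat.cast_nonneg n) (by linarith) hmax
    rw [mul_comm (max _ m ^ _)] at key
    exact (ENNReal.ofReal_le_ofReal key).trans_eq
      (ENNReal.ofReal_add (by positivity) (by positivity))
  have hφ := lintegral_one_add_norm_rpow_mul_max_rpow_le μ le_rfl (by linarith) hm (q := a)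
  have hψ := lintegral_one_add_norm_rpow_mul_max_rpow_le μ han (by linarith) hm (q := n)
  rw [show (n : ℝ) - n - a = -a by ring, add_sub_cancel_left] at hφ
  rw [show (n : ℝ) - a - n = -a by ring, add_sub_cancel_right] at hψ
  calc ∫⁻ t, ENNReal.ofReal ((1 + ‖t‖) ^ (-(n : ℝ)) * (1 + ‖x - t‖) ^ (-a)) ∂μ
      ≤ ∫⁻ t, φ ‖t‖ + ψ ‖x - t‖ ∂μ := lintegral_mono hsplit
    _ = ∫⁻ t, φ ‖t‖ ∂μ + ∫⁻ t, ψ ‖t‖ ∂μ := by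
        simp_rw [norm_sub_rev x]
        rw [lintegral_add_left (by fun_prop), lintegral_sub_right_eq_self (fun t => ψ ‖t‖)]
    _ ≤ μ.toSphere univ * ENNReal.ofReal (m ^ (-a) * (Real.log m + 1 / a)) +
        μ.toSphere univ * ENNReal.ofReal (m ^ (-a) * (Real.log m + 1 / a)) := add_le_add hφ hψ
    _ = ENNReal.ofReal (μ.toSphere.real univ * (2 * (m ^ (-a) * (Real.log m + 1 / a)))) := by
        rw [← two_mul, ENNReal.ofReal_mul measureReal_nonneg, ofReal_measureReal, mul_left_comm,
          ENNReal.ofReal_mul zero_le_two, ENNReal.ofReal_ofNat]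
    _ ≤ _ := by
        refine ENNReal.ofReal_le_ofReal ?_
        grw [half_one_add_rpow_neg_mul_le hx ha han]
        exact le_of_eq (by ring)

end MeasureTheory

theorem enorm_convolution_lsmul_le {G F : Type*} [Sub G] [MeasurableSpace G] [NormedAddCommGroup F]
    [NormedSpace ℝ F] {μ : Measure G} {f : G → ℝ} {g : G → F} {w v : G → ℝ}
    (hf : ∀ t, |f t| ≤ w t) (hg : ∀ t, ‖g t‖ ≤ v t) (x : G) :
    ‖convolution f g (ContinuousLinearMap.lsmul ℝ ℝ) μ x‖ₑ ≤
      ∫⁻ t, ENNReal.ofReal (w t * v (x - t)) ∂μ := by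
  refine (enorm_integral_le_lintegral_enorm _).trans (lintegral_mono fun t => ?_)
  rw [← ofReal_norm, ContinuousLinearMap.lsmul_apply, norm_smul, Real.norm_eq_abs]
  exact ENNReal.ofReal_le_ofReal
    (mul_le_mul (hf t) (hg _) (norm_nonneg _) ((abs_nonneg _).trans (hf t)))

theorem convolution_kernel_decay_log_general (d : ℕ) (hd : 3 ≤ d)
    (E : EuclideanSpace ℝ (Fin d) → ℝ) (C : ℝ) (hC : 0 < C)
    (hEbound : ∀ n ≤ 1, ∀ x : EuclideanSpace ℝ (Fin d),
      ‖iteratedFDeriv ℝ n E x‖ ≤ C * (1 + ‖x‖) ^ (-((n : ℝ) + d - 1))) :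
    ∃ C' : ℝ, 0 < C' ∧
      ∀ (f : EuclideanSpace ℝ (Fin d) → ℝ) (M : ℝ),
        Measurable f →
        (∀ x, |f x| ≤ M * (1 + ‖x‖) ^ (-(d : ℝ))) →
        ∀ n ≤ 1, ∀ x : EuclideanSpace ℝ (Fin d), 2 ≤ ‖x‖ →
          ‖MeasureTheory.convolution f (iteratedFDeriv ℝ n E)
              (ContinuousLinearMap.lsmul ℝ ℝ) volume x‖ ≤
            C' * Real.log ‖x‖ * (1 + ‖x‖) ^ (-((n : ℝ) + d - 1)) * M := by
  have : Nontrivial (EuclideanSpace ℝ (Fin d)) :=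
    Module.nontrivial_of_finrank_pos (by rw [finrank_euclideanSpace_fin]; omega)
  set κ := (volume : Measure (EuclideanSpace ℝ (Fin d))).toSphere.real univ
  have hκ : 0 < κ := ENNReal.toReal_pos
    (Measure.measure_univ_ne_zero.2 (Measure.toSphere_ne_zero _)) (measure_ne_top _ _)
  refine ⟨C * 2 ^ (d + 3) * κ, by positivity, fun f M _ hf n hn x hx => ?_⟩
  have hM : 0 ≤ M := by simpa using (abs_nonneg _).trans (hf 0)
  have hd' : (3 : ℝ) ≤ d := by exact_mod_cast hd
  have hn' : (n : ℝ) ≤ 1 := by exact_mod_cast hn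
  have hkernel := lintegral_one_add_norm_rpow_mul_one_add_norm_sub_rpow_le volume
    (a := n + d - 1) (by linarith [n.cast_nonneg (α := ℝ)])
    (by rw [finrank_euclideanSpace_fin]; linarith) hx
  simp only [finrank_euclideanSpace_fin] at hkernel
  have hlog : 0 ≤ Real.log ‖x‖ := Real.log_nonneg (by linarith)
  rw [← ENNReal.ofReal_le_ofReal_iff (by positivity), ofReal_norm]
  calc ‖convolution f (iteratedFDeriv ℝ n E) (ContinuousLinearMap.lsmul ℝ ℝ) volume x‖ₑ
      ≤ ∫⁻ t, ENNReal.ofReal (M * (1 + ‖t‖) ^ (-(d : ℝ)) *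
          (C * (1 + ‖x - t‖) ^ (-((n : ℝ) + d - 1)))) :=
        enorm_convolution_lsmul_le hf (hEbound n hn) x
    _ = ENNReal.ofReal (M * C) * ∫⁻ t, ENNReal.ofReal ((1 + ‖t‖) ^ (-(d : ℝ)) *
          (1 + ‖x - t‖) ^ (-((n : ℝ) + d - 1))) := by
        rw [← lintegral_const_mul' _ _ ENNReal.ofReal_ne_top]
        congr 1 with t
        rw [← ENNReal.ofReal_mul (by positivity)]
        congr 1
        ring
    _ ≤ ENNReal.ofReal (M * C) * ENNReal.ofReal
          (2 ^ (d + 3) * κ * Real.log ‖x‖ * (1 + ‖x‖) ^ (-((n : ℝ) + d - 1))) := by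
        gcongr
    _ = _ := by
        rw [← ENNReal.ofReal_mul (by positivity)]
        congr 1
        ring

/-- Critical convolution decay estimate with logarithmic loss:
if `|∂^α E(x)| ≤ C(1+|x|)^{−(|α|+d−1)}` for `|α| ≤ 1` and `|f(x)| ≤ M(1+|x|)^{−d}`,
then for `|α| ≤ 1` and `|x| ≥ 2`,
`|(∂^α E ∗ f)(x)| ≤ C' (log|x|) (1+|x|)^{−(|α|+d−1)} M`. -/
theorem convolution_kernel_decay_log (d : ℕ) (hd : 3 ≤ d)
    (E : EuclideanSpace ℝ (Fin d) → ℝ) (C : ℝ) (hC : 0 < C)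
    (hE : ContDiff ℝ 1 E)
    (hEbound : ∀ n ≤ 1, ∀ x : EuclideanSpace ℝ (Fin d),
      ‖iteratedFDeriv ℝ n E x‖ ≤ C * (1 + ‖x‖) ^ (-((n : ℝ) + d - 1))) :
    ∃ C' : ℝ, 0 < C' ∧
      ∀ (f : EuclideanSpace ℝ (Fin d) → ℝ) (M : ℝ),
        Measurable f →
        (∀ x, |f x| ≤ M * (1 + ‖x‖) ^ (-(d : ℝ))) →
        ∀ n ≤ 1, ∀ x : EuclideanSpace ℝ (Fin d), 2 ≤ ‖x‖ →
          ‖MeasureTheory.convolution f (iteratedFDeriv ℝ n E)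
              (ContinuousLinearMap.lsmul ℝ ℝ) volume x‖ ≤
            C' * Real.log ‖x‖ * (1 + ‖x‖) ^ (-((n : ℝ) + d - 1)) * M :=
  convolution_kernel_decay_log_general d hd E C hC hEbound
end

section
/- Let ξ ∈ ℝ^d with 0 < |ξ| < 1/2 and set λ_±(ξ) = (−1 ± √(1−4|ξ|²))/2. Define the (d+1)×(d+1) matrices Π₀(ξ) = diag(0, I_d − ξξᵀ/|ξ|²) and Π_±(ξ) = ±(λ₊−λ₋)^{−1} [[−λ_∓, −iξᵀ],[−iξ, λ_± ξξᵀ/|ξ|²]]. Then Π₀ + Π₊ + Π₋ = I_{d+1}, Π_j Π_k = δ_{jk} Π_j for j,k ∈ {0,+,−}, and −Â_ξ Π_j = λ_j Π_j for each j, where Â_ξ = [[0, iξᵀ],[iξ, I_d]] and λ₀ = −1. -/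
noncomputable section

/-- The symbol `Â_ξ = [[0, iξᵀ],[iξ, I_d]]`. -/
def eulerDampingSymbol (d : ℕ) (ξ : EuclideanSpace ℝ (Fin d)) :
    Matrix (Unit ⊕ Fin d) (Unit ⊕ Fin d) ℂ :=
  Matrix.fromBlocks 0 (Matrix.of fun _ j => Complex.I * (ξ j : ℂ))
    (Matrix.of fun i _ => Complex.I * (ξ i : ℂ)) 1

/-- The eigenvalue `λ₊(ξ) = (−1 + √(1−4|ξ|²))/2`. -/
def lamPlus (d : ℕ) (ξ : EuclideanSpace ℝ (Fin d)) : ℂ :=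
  (-1 + (Real.sqrt (1 - 4 * ‖ξ‖ ^ 2) : ℂ)) / 2

/-- The eigenvalue `λ₋(ξ) = (−1 − √(1−4|ξ|²))/2`. -/
def lamMinus (d : ℕ) (ξ : EuclideanSpace ℝ (Fin d)) : ℂ :=
  (-1 - (Real.sqrt (1 - 4 * ‖ξ‖ ^ 2) : ℂ)) / 2

/-- The projection matrix `ξξᵀ/|ξ|²`. -/
def xiProj (d : ℕ) (ξ : EuclideanSpace ℝ (Fin d)) : Matrix (Fin d) (Fin d) ℂ :=
  Matrix.of fun i j => (ξ i : ℂ) * (ξ j : ℂ) / ((‖ξ‖ : ℂ) ^ 2)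

/-- The eigenprojection `Π₀(ξ) = diag(0, I_d − ξξᵀ/|ξ|²)`. -/
def Pi0 (d : ℕ) (ξ : EuclideanSpace ℝ (Fin d)) : Matrix (Unit ⊕ Fin d) (Unit ⊕ Fin d) ℂ :=
  Matrix.fromBlocks 0 0 0 (1 - xiProj d ξ)

/-- The eigenprojection `Π₊(ξ) = (λ₊−λ₋)⁻¹ [[−λ₋, −iξᵀ],[−iξ, λ₊ ξξᵀ/|ξ|²]]`. -/
def PiPlus (d : ℕ) (ξ : EuclideanSpace ℝ (Fin d)) : Matrix (Unit ⊕ Fin d) (Unit ⊕ Fin d) ℂ :=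
  (lamPlus d ξ - lamMinus d ξ)⁻¹ •
    Matrix.fromBlocks (Matrix.of fun _ _ => -lamMinus d ξ)
      (Matrix.of fun _ j => -(Complex.I * (ξ j : ℂ)))
      (Matrix.of fun i _ => -(Complex.I * (ξ i : ℂ)))
      (lamPlus d ξ • xiProj d ξ)

/-- The eigenprojection `Π₋(ξ) = −(λ₊−λ₋)⁻¹ [[−λ₊, −iξᵀ],[−iξ, λ₋ ξξᵀ/|ξ|²]]`. -/
def PiMinus (d : ℕ) (ξ : EuclideanSpace ℝ (Fin d)) : Matrix (Unit ⊕ Fin d) (Unit ⊕ Fin d) ℂ :=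
  (-(lamPlus d ξ - lamMinus d ξ)⁻¹) •
    Matrix.fromBlocks (Matrix.of fun _ _ => -lamPlus d ξ)
      (Matrix.of fun _ j => -(Complex.I * (ξ j : ℂ)))
      (Matrix.of fun i _ => -(Complex.I * (ξ i : ℂ)))
      (lamMinus d ξ • xiProj d ξ)

/-! With `v = iξ`, every matrix in the statement has the block form
`[[a, b vᵀ], [c v, e v vᵀ + f I]]`, and these matrices form an algebra because `vᵀ v = -|ξ|²` is
a scalar. Each identity therefore reduces to five scalar identities in `λ₊, λ₋`, which follow from
Vieta's formulas `λ₊ + λ₋ = -1`, `λ₊ λ₋ = |ξ|²` for the roots of `X² + X + |ξ|²`, together with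
`λ₊ ≠ λ₋` and `|ξ| ≠ 0`. -/

/-- `l` and `μ` are the two distinct roots of `X² + X - q`, and `q ≠ 0`. -/
structure DistinctRoots {K : Type*} [Field K] (q l μ : K) : Prop where
  add_eq_neg_one : l + μ = -1
  mul_eq_neg : l * μ = -q
  ne : l ≠ μ
  ne_zero : q ≠ 0

namespace DistinctRoots

variable {K : Type*} [Field K] {q l μ : K}

theorem symm (h : DistinctRoots q l μ) : DistinctRoots q μ l :=
  ⟨by rw [add_comm, h.add_eq_neg_one], by rw [mul_comm, h.mul_eq_neg], h.ne.symm, h.ne_zero⟩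

theorem eq_neg_mul (h : DistinctRoots q l μ) : q = -(l * μ) := by
  rw [h.mul_eq_neg, neg_neg]

theorem eq_neg_one_sub (h : DistinctRoots q l μ) : μ = -1 - l := by
  linear_combination h.add_eq_neg_one

theorem left_ne_zero (h : DistinctRoots q l μ) : l ≠ 0 := by
  rintro rfl
  exact h.ne_zero (by simpa using h.mul_eq_neg.symm)

theorem right_ne_zero (h : DistinctRoots q l μ) : μ ≠ 0 :=
  h.symm.left_ne_zero

end DistinctRoots

namespace Matrix

section RankOneBlock

variable {R n : Type*} [CommRing R] (v : n → R)

theorem replicateRow_mul_replicateCol_self [Fintype n] :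
    replicateRow Unit v * replicateCol Unit v = (v ⬝ᵥ v) • (1 : Matrix Unit Unit R) := by
  ext
  simp

variable [DecidableEq n]

def rankOneBlock (a b c e f : R) : Matrix (Unit ⊕ n) (Unit ⊕ n) R :=
  fromBlocks (a • 1) (b • replicateRow Unit v) (c • replicateCol Unit v)
    (e • (replicateCol Unit v * replicateRow Unit v) + f • 1)

theorem rankOneBlock_mul [Fintype n] (a b c e f a' b' c' e' f' : R) :
    rankOneBlock v a b c e f * rankOneBlock v a' b' c' e' f' =
      rankOneBlock v (a * a' + (v ⬝ᵥ v) * b * c') (a * b' + b * f' + (v ⬝ᵥ v) * b * e')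
        (c * a' + f * c' + (v ⬝ᵥ v) * e * c') (c * b' + e * f' + f * e' + (v ⬝ᵥ v) * e * e')
        (f * f') := by
  unfold rankOneBlock
  set col := replicateCol Unit v
  set row := replicateRow Unit v
  have hrc : row * col = (v ⬝ᵥ v) • 1 := replicateRow_mul_replicateCol_self v
  have hcol : col * row * col = (v ⬝ᵥ v) • col := by
    rw [Matrix.mul_assoc, hrc, Matrix.mul_smul, Matrix.mul_one]
  have hrow : row * (col * row) = (v ⬝ᵥ v) • row := by
    rw [← Matrix.mul_assoc, hrc, Matrix.smul_mul, Matrix.one_mul]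
  have hsq : col * row * (col * row) = (v ⬝ᵥ v) • (col * row) := by
    rw [Matrix.mul_assoc, hrow, Matrix.mul_smul]
  simp only [fromBlocks_multiply, Matrix.smul_mul, Matrix.mul_smul, Matrix.mul_add,
    Matrix.add_mul, Matrix.one_mul, Matrix.mul_one, hrc, hcol, hrow, hsq]
  congr 1 <;> module

theorem rankOneBlock_add (a b c e f a' b' c' e' f' : R) :
    rankOneBlock v a b c e f + rankOneBlock v a' b' c' e' f' =
      rankOneBlock v (a + a') (b + b') (c + c') (e + e') (f + f') := by
  simp only [rankOneBlock, fromBlocks_add]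
  congr 1 <;> module

theorem smul_rankOneBlock (s a b c e f : R) :
    s • rankOneBlock v a b c e f = rankOneBlock v (s * a) (s * b) (s * c) (s * e) (s * f) := by
  simp only [rankOneBlock, fromBlocks_smul]
  congr 1 <;> module

theorem neg_rankOneBlock (a b c e f : R) :
    -rankOneBlock v a b c e f = rankOneBlock v (-a) (-b) (-c) (-e) (-f) := by
  simp only [rankOneBlock, fromBlocks_neg]
  congr 1 <;> module

theorem rankOneBlock_one : rankOneBlock v 1 0 0 0 1 = 1 := by
  simp [rankOneBlock, fromBlocks_one]

theorem rankOneBlock_zero : rankOneBlock v 0 0 0 0 0 = 0 := by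
  simp [rankOneBlock, fromBlocks_zero]

end RankOneBlock

section Eigenprojections

variable {K n : Type*} [Field K] [Fintype n] [DecidableEq n] (v : n → K)

/-- The eigenprojection of `-[[0, vᵀ], [v, I]]` for the eigenvalue `-1`, onto `v^⊥ ⊆ Kⁿ`. -/
def eigenprojNegOne : Matrix (Unit ⊕ n) (Unit ⊕ n) K :=
  rankOneBlock v 0 0 0 (-(v ⬝ᵥ v)⁻¹) 1

/-- The eigenprojection of `-[[0, vᵀ], [v, I]]` for the eigenvalue `l`, when `μ` is the
other root of `X² + X - vᵀv`. -/
def eigenproj (l μ : K) : Matrix (Unit ⊕ n) (Unit ⊕ n) K :=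
  (l - μ)⁻¹ • rankOneBlock v (-μ) (-1) (-1) (l * (v ⬝ᵥ v)⁻¹) 0

variable {v} {l μ : K}

theorem eigenprojNegOne_mul_self (hq : v ⬝ᵥ v ≠ 0) :
    eigenprojNegOne v * eigenprojNegOne v = eigenprojNegOne v := by
  simp only [eigenprojNegOne, rankOneBlock_mul]
  congr! 1 <;> field_simp <;> ring

theorem eigenproj_mul_self (h : DistinctRoots (v ⬝ᵥ v) l μ) :
    eigenproj v l μ * eigenproj v l μ = eigenproj v l μ := by
  have hl := h.left_ne_zero
  have hμ := h.right_ne_zero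
  have hlμ := sub_ne_zero.mpr h.ne
  simp only [eigenproj, smul_rankOneBlock, rankOneBlock_mul, h.eq_neg_mul]
  obtain rfl := h.eq_neg_one_sub
  congr! 1 <;> field_simp <;> ring

theorem eigenproj_mul_eigenproj_swap (h : DistinctRoots (v ⬝ᵥ v) l μ) :
    eigenproj v l μ * eigenproj v μ l = 0 := by
  have hl := h.left_ne_zero
  have hμ := h.right_ne_zero
  have hlμ := sub_ne_zero.mpr h.ne
  simp only [eigenproj, smul_rankOneBlock, rankOneBlock_mul, h.eq_neg_mul, ← rankOneBlock_zero v]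
  obtain rfl := h.eq_neg_one_sub
  congr! 1 <;> field_simp <;> ring

theorem eigenprojNegOne_mul_eigenproj (h : DistinctRoots (v ⬝ᵥ v) l μ) :
    eigenprojNegOne v * eigenproj v l μ = 0 := by
  have hl := h.left_ne_zero
  have hμ := h.right_ne_zero
  simp only [eigenprojNegOne, eigenproj, smul_rankOneBlock, rankOneBlock_mul, h.eq_neg_mul,
    ← rankOneBlock_zero v]
  obtain rfl := h.eq_neg_one_sub
  congr! 1 <;> field_simp <;> ring

theorem eigenproj_mul_eigenprojNegOne (h : DistinctRoots (v ⬝ᵥ v) l μ) :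
    eigenproj v l μ * eigenprojNegOne v = 0 := by
  have hl := h.left_ne_zero
  have hμ := h.right_ne_zero
  simp only [eigenprojNegOne, eigenproj, smul_rankOneBlock, rankOneBlock_mul, h.eq_neg_mul,
    ← rankOneBlock_zero v]
  obtain rfl := h.eq_neg_one_sub
  congr! 1 <;> field_simp <;> ring

theorem eigenprojNegOne_add_eigenproj_add_eigenproj (h : DistinctRoots (v ⬝ᵥ v) l μ) :
    eigenprojNegOne v + eigenproj v l μ + eigenproj v μ l = 1 := by
  have hl := h.left_ne_zero
  have hμ := h.right_ne_zero
  have hlμ := sub_ne_zero.mpr h.ne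
  have hμl := sub_ne_zero.mpr h.ne.symm
  simp only [eigenprojNegOne, eigenproj, smul_rankOneBlock, rankOneBlock_add, h.eq_neg_mul,
    ← rankOneBlock_one v]
  obtain rfl := h.eq_neg_one_sub
  congr! 1 <;> field_simp <;> ring

theorem neg_rankOneBlock_mul_eigenprojNegOne (hq : v ⬝ᵥ v ≠ 0) :
    -rankOneBlock v 0 1 1 0 1 * eigenprojNegOne v = (-1 : K) • eigenprojNegOne v := by
  simp only [eigenprojNegOne, neg_rankOneBlock, smul_rankOneBlock, rankOneBlock_mul]
  congr! 1 <;> field_simp <;> ring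

theorem neg_rankOneBlock_mul_eigenproj (h : DistinctRoots (v ⬝ᵥ v) l μ) :
    -rankOneBlock v 0 1 1 0 1 * eigenproj v l μ = l • eigenproj v l μ := by
  have hl := h.left_ne_zero
  have hμ := h.right_ne_zero
  have hlμ := sub_ne_zero.mpr h.ne
  simp only [eigenproj, neg_rankOneBlock, smul_rankOneBlock, rankOneBlock_mul, h.eq_neg_mul]
  obtain rfl := h.eq_neg_one_sub
  congr! 1 <;> field_simp <;> ring

end Eigenprojections

end Matrix

open Matrix

section EulerDamping

variable {d : ℕ} (ξ : EuclideanSpace ℝ (Fin d))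

def iXi : Fin d → ℂ := fun j => Complex.I * (ξ j : ℂ)

theorem iXi_dotProduct_self : iXi ξ ⬝ᵥ iXi ξ = -((‖ξ‖ : ℂ) ^ 2) := by
  have h : ((‖ξ‖ ^ 2 : ℝ) : ℂ) = ∑ j, ((ξ j : ℂ)) ^ 2 := by
    rw [EuclideanSpace.real_norm_sq_eq]
    push_cast
    rfl
  push_cast at h
  rw [h, dotProduct, ← Finset.sum_neg_distrib]
  refine Finset.sum_congr rfl fun j _ => ?_
  simp only [iXi]
  linear_combination (ξ j : ℂ) ^ 2 * Complex.I_sq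

theorem eulerDampingSymbol_eq_rankOneBlock :
    eulerDampingSymbol d ξ = rankOneBlock (iXi ξ) 0 1 1 0 1 := by
  unfold eulerDampingSymbol rankOneBlock
  congr 1 <;> ext <;> simp [iXi]

theorem xiProj_eq : xiProj d ξ =
    (iXi ξ ⬝ᵥ iXi ξ)⁻¹ • (replicateCol Unit (iXi ξ) * replicateRow Unit (iXi ξ)) := by
  rw [← vecMulVec_eq, iXi_dotProduct_self]
  ext i j
  simp only [xiProj, iXi, of_apply, Matrix.smul_apply, vecMulVec_apply, smul_eq_mul]
  linear_combination ((ξ i : ℂ) * ξ j * ((‖ξ‖ : ℂ) ^ 2)⁻¹) * Complex.I_sq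

theorem Pi0_eq_eigenprojNegOne : Pi0 d ξ = eigenprojNegOne (iXi ξ) := by
  unfold Pi0 eigenprojNegOne rankOneBlock
  rw [xiProj_eq]
  congr 1 <;> module

theorem PiPlus_eq_eigenproj : PiPlus d ξ = eigenproj (iXi ξ) (lamPlus d ξ) (lamMinus d ξ) := by
  unfold PiPlus eigenproj rankOneBlock
  rw [xiProj_eq]
  congr 1
  congr 1 <;> ext <;> simp [iXi, mul_assoc]

theorem PiMinus_eq_eigenproj : PiMinus d ξ = eigenproj (iXi ξ) (lamMinus d ξ) (lamPlus d ξ) := by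
  unfold PiMinus eigenproj rankOneBlock
  rw [xiProj_eq, ← inv_neg, neg_sub]
  congr 1
  congr 1 <;> ext <;> simp [iXi, mul_assoc]

theorem distinctRoots_lamPlus_lamMinus (hξ0 : 0 < ‖ξ‖) (hξ : ‖ξ‖ < 1 / 2) :
    DistinctRoots (iXi ξ ⬝ᵥ iXi ξ) (lamPlus d ξ) (lamMinus d ξ) := by
  have hpos : 0 < 1 - 4 * ‖ξ‖ ^ 2 := by nlinarith
  have hsqrt : ((Real.sqrt (1 - 4 * ‖ξ‖ ^ 2) : ℝ) : ℂ) ^ 2 = 1 - 4 * (‖ξ‖ : ℂ) ^ 2 := by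
    rw [← Complex.ofReal_pow, Real.sq_sqrt hpos.le]
    push_cast
    ring
  refine ⟨?_, ?_, ?_, ?_⟩
  · unfold lamPlus lamMinus; ring
  · rw [iXi_dotProduct_self]; unfold lamPlus lamMinus; linear_combination -hsqrt / 4
  · have hs : (Real.sqrt (1 - 4 * ‖ξ‖ ^ 2) : ℂ) ≠ 0 :=
      Complex.ofReal_ne_zero.mpr (Real.sqrt_pos.mpr hpos).ne'
    unfold lamPlus lamMinus
    intro h
    exact hs (by linear_combination h)
  · rw [iXi_dotProduct_self]
    simpa using hξ0.ne'

end EulerDamping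

/-- For `0 < |ξ| < 1/2`, the matrices `Π₀, Π₊, Π₋` form a complete system of mutually
orthogonal eigenprojections of `−Â_ξ` with eigenvalues `−1, λ₊, λ₋`. -/
theorem eigenprojections_eulerDampingSymbol (d : ℕ) (ξ : EuclideanSpace ℝ (Fin d))
    (hξ0 : 0 < ‖ξ‖) (hξ : ‖ξ‖ < 1 / 2) :
    Pi0 d ξ + PiPlus d ξ + PiMinus d ξ = 1 ∧
    (Pi0 d ξ * Pi0 d ξ = Pi0 d ξ ∧ PiPlus d ξ * PiPlus d ξ = PiPlus d ξ ∧
      PiMinus d ξ * PiMinus d ξ = PiMinus d ξ) ∧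
    (Pi0 d ξ * PiPlus d ξ = 0 ∧ PiPlus d ξ * Pi0 d ξ = 0 ∧
      Pi0 d ξ * PiMinus d ξ = 0 ∧ PiMinus d ξ * Pi0 d ξ = 0 ∧
      PiPlus d ξ * PiMinus d ξ = 0 ∧ PiMinus d ξ * PiPlus d ξ = 0) ∧
    ((-(eulerDampingSymbol d ξ)) * Pi0 d ξ = (-1 : ℂ) • Pi0 d ξ ∧
      (-(eulerDampingSymbol d ξ)) * PiPlus d ξ = lamPlus d ξ • PiPlus d ξ ∧
      (-(eulerDampingSymbol d ξ)) * PiMinus d ξ = lamMinus d ξ • PiMinus d ξ) := by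
  have h := distinctRoots_lamPlus_lamMinus ξ hξ0 hξ
  rw [Pi0_eq_eigenprojNegOne, PiPlus_eq_eigenproj, PiMinus_eq_eigenproj,
    eulerDampingSymbol_eq_rankOneBlock]
  exact ⟨eigenprojNegOne_add_eigenproj_add_eigenproj h,
    ⟨eigenprojNegOne_mul_self h.ne_zero, eigenproj_mul_self h, eigenproj_mul_self h.symm⟩,
    ⟨eigenprojNegOne_mul_eigenproj h, eigenproj_mul_eigenprojNegOne h,
      eigenprojNegOne_mul_eigenproj h.symm, eigenproj_mul_eigenprojNegOne h.symm,
      eigenproj_mul_eigenproj_swap h, eigenproj_mul_eigenproj_swap h.symm⟩,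
    neg_rankOneBlock_mul_eigenprojNegOne h.ne_zero, neg_rankOneBlock_mul_eigenproj h,
    neg_rankOneBlock_mul_eigenproj h.symm⟩
end
end

section
/- Let 0 < r_∞ < 1/2. Then there is a constant C such that for all ξ with 0 < |ξ| ≤ r_∞ and all t ∈ [0,T], the matrix exponential satisfies ‖e^{−t Â_ξ}‖ ≤ C, where Â_ξ = [[0, iξᵀ],[iξ, I_d]]. In particular e^{−tÂ_ξ} = e^{tλ₊(ξ)} Π₊(ξ) + e^{tλ₋(ξ)} Π₋(ξ) + e^{−t} Π₀(ξ) with the eigenprojections satisfying ‖Π_j(ξ)‖ ≤ C uniformly for |ξ| ≤ r_∞. -/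
open NormedSpace Nat

noncomputable section

/-! On `0 < |ξ| < 1/2` the matrices `Π₊, Π₋, Π₀` are complete orthogonal idempotents and
`-Â_ξ = λ₊ Π₊ + λ₋ Π₋ - Π₀`, so the power series of `exp (-t Â_ξ)` collapses to
`Σ e^{t λ_j} Π_j`; since the `λ_j` are real and nonpositive, the bound reduces to bounds on the
projections. All these matrices lie in the five-dimensional algebra of block matrices
`[[a, b iξᵀ], [c iξ, e I + f ξξᵀ/|ξ|²]]`, whose multiplication table (from `iξᵀ iξ = -|ξ|²`) turns
every identity into scalar algebra in `σ = √(1 - 4|ξ|²) = λ₊ - λ₋`. The entries of `Π_±` are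
`O(1/σ)`, and `σ ≥ √(1 - 4 r_∞²)`. -/

open NormedSpace
open scoped Nat

section Idempotents

variable {𝕂 𝔸 ι : Type*} [Fintype ι] {P : ι → 𝔸}

theorem CompleteOrthogonalIdempotents.sum_smul_pow [CommSemiring 𝕂] [Semiring 𝔸] [Algebra 𝕂 𝔸]
    (hP : CompleteOrthogonalIdempotents P) (c : ι → 𝕂) (n : ℕ) :
    (∑ i, c i • P i) ^ n = ∑ i, c i ^ n • P i := by
  classical
  induction n with
  | zero => simpa using hP.complete.symm
  | succ n ih =>
    simp only [pow_succ, ih, Finset.sum_mul_sum, smul_mul_smul, hP.mul_eq, smul_ite, smul_zero,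
      Finset.sum_ite_eq, Finset.mem_univ, if_true]

theorem CompleteOrthogonalIdempotents.exp_sum_smul [RCLike 𝕂] [Ring 𝔸] [Algebra 𝕂 𝔸]
    [TopologicalSpace 𝔸] [IsTopologicalRing 𝔸] [ContinuousSMul 𝕂 𝔸] [T2Space 𝔸]
    (hP : CompleteOrthogonalIdempotents P) (c : ι → 𝕂) :
    exp (∑ i, c i • P i) = ∑ i, exp (c i) • P i := by
  have hsum (i : ι) : Summable fun n : ℕ => ((n !⁻¹ : 𝕂) * c i ^ n) • P i :=
    (expSeries_summable' (𝕂 := 𝕂) (c i)).smul_const (P i)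
  simp only [exp_eq_tsum 𝕂, hP.sum_smul_pow, Finset.smul_sum, smul_smul, smul_eq_mul]
  rw [Summable.tsum_finsetSum fun i _ => hsum i]
  exact Finset.sum_congr rfl fun i _ =>
    (expSeries_summable' (𝕂 := 𝕂) (c i)).tsum_smul_const (P i)

end Idempotents

section EulerDamping

open Matrix

variable {d : ℕ} {ξ : EuclideanSpace ℝ (Fin d)}

def iXiRow (d : ℕ) (ξ : EuclideanSpace ℝ (Fin d)) : Matrix Unit (Fin d) ℂ :=
  of fun _ j => Complex.I * (ξ j : ℂ)

def iXiCol (d : ℕ) (ξ : EuclideanSpace ℝ (Fin d)) : Matrix (Fin d) Unit ℂ :=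
  of fun i _ => Complex.I * (ξ i : ℂ)

lemma iXiRow_mul_iXiCol : iXiRow d ξ * iXiCol d ξ = -((‖ξ‖ : ℂ) ^ 2) • 1 := by
  ext
  simp only [iXiRow, iXiCol, mul_apply, of_apply, Matrix.smul_apply, one_apply_eq, smul_eq_mul,
    mul_one]
  have h := congrArg (fun x : ℝ => (x : ℂ)) (EuclideanSpace.real_norm_sq_eq ξ)
  push_cast at h
  rw [h, ← Finset.sum_neg_distrib]
  refine Finset.sum_congr rfl fun j _ => ?_
  linear_combination (ξ j : ℂ) ^ 2 * Complex.I_sq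

lemma xiProj_eq_smul :
    xiProj d ξ = -((‖ξ‖ : ℂ) ^ 2)⁻¹ • (iXiCol d ξ * iXiRow d ξ) := by
  ext i j
  simp only [xiProj, iXiRow, iXiCol, mul_apply, of_apply, Matrix.smul_apply, smul_eq_mul,
    Finset.univ_unique, Finset.sum_singleton]
  linear_combination ((ξ i : ℂ) * ξ j / (‖ξ‖ : ℂ) ^ 2) * Complex.I_sq

lemma iXiRow_mul_xiProj (hξ : ξ ≠ 0) : iXiRow d ξ * xiProj d ξ = iXiRow d ξ := by
  have : (‖ξ‖ : ℂ) ^ 2 ≠ 0 := by simpa using hξ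
  rw [xiProj_eq_smul, Matrix.mul_smul, ← Matrix.mul_assoc, iXiRow_mul_iXiCol, Matrix.smul_mul,
    Matrix.one_mul, smul_smul, neg_mul_neg, inv_mul_cancel₀ this, one_smul]

lemma xiProj_mul_iXiCol (hξ : ξ ≠ 0) : xiProj d ξ * iXiCol d ξ = iXiCol d ξ := by
  have : (‖ξ‖ : ℂ) ^ 2 ≠ 0 := by simpa using hξ
  rw [xiProj_eq_smul, Matrix.smul_mul, Matrix.mul_assoc, iXiRow_mul_iXiCol, Matrix.mul_smul,
    Matrix.mul_one, smul_smul, neg_mul_neg, inv_mul_cancel₀ this, one_smul]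

lemma iXiCol_mul_iXiRow (hξ : ξ ≠ 0) :
    iXiCol d ξ * iXiRow d ξ = -((‖ξ‖ : ℂ) ^ 2) • xiProj d ξ := by
  have : (‖ξ‖ : ℂ) ^ 2 ≠ 0 := by simpa using hξ
  rw [xiProj_eq_smul, smul_smul, neg_mul_neg, mul_inv_cancel₀ this, one_smul]

lemma xiProj_mul_xiProj (hξ : ξ ≠ 0) : xiProj d ξ * xiProj d ξ = xiProj d ξ := by
  nth_rw 1 [xiProj_eq_smul]
  rw [Matrix.smul_mul, Matrix.mul_assoc, iXiRow_mul_xiProj hξ, ← xiProj_eq_smul]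

def xiMatrix (d : ℕ) (ξ : EuclideanSpace ℝ (Fin d)) (a b c e f : ℂ) :
    Matrix (Unit ⊕ Fin d) (Unit ⊕ Fin d) ℂ :=
  fromBlocks (a • 1) (b • iXiRow d ξ) (c • iXiCol d ξ) (e • 1 + f • xiProj d ξ)

lemma xiMatrix_mul (hξ : ξ ≠ 0) (a b c e f a' b' c' e' f' : ℂ) :
    xiMatrix d ξ a b c e f * xiMatrix d ξ a' b' c' e' f' =
      xiMatrix d ξ (a * a' - b * c' * (‖ξ‖ : ℂ) ^ 2) (a * b' + b * (e' + f'))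
        (c * a' + (e + f) * c') (e * e') (e * f' + f * e' + f * f' - c * b' * (‖ξ‖ : ℂ) ^ 2) := by
  simp only [xiMatrix, fromBlocks_multiply, Matrix.add_mul, Matrix.mul_add, smul_mul_smul,
    Matrix.one_mul, Matrix.mul_one, iXiRow_mul_iXiCol, iXiCol_mul_iXiRow hξ, iXiRow_mul_xiProj hξ,
    xiProj_mul_iXiCol hξ, xiProj_mul_xiProj hξ, Matrix.mul_smul, Matrix.smul_mul]
  congr 1 <;> module

lemma xiMatrix_add (a b c e f a' b' c' e' f' : ℂ) :
    xiMatrix d ξ a b c e f + xiMatrix d ξ a' b' c' e' f' =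
      xiMatrix d ξ (a + a') (b + b') (c + c') (e + e') (f + f') := by
  simp only [xiMatrix, fromBlocks_add]
  congr 1 <;> module

lemma smul_xiMatrix (z a b c e f : ℂ) :
    z • xiMatrix d ξ a b c e f = xiMatrix d ξ (z * a) (z * b) (z * c) (z * e) (z * f) := by
  simp only [xiMatrix, fromBlocks_smul]
  congr 1 <;> module

lemma xiMatrix_zero : xiMatrix d ξ 0 0 0 0 0 = 0 := by
  simp [xiMatrix]

lemma xiMatrix_one : xiMatrix d ξ 1 0 0 1 0 = 1 := by
  simp [xiMatrix]

def eigenGap (d : ℕ) (ξ : EuclideanSpace ℝ (Fin d)) : ℝ :=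
  √(1 - 4 * ‖ξ‖ ^ 2)

lemma eigenGap_pos (h : ‖ξ‖ < 1 / 2) : 0 < eigenGap d ξ :=
  Real.sqrt_pos.2 (by nlinarith [norm_nonneg ξ])

lemma eigenGap_le_one : eigenGap d ξ ≤ 1 :=
  Real.sqrt_le_one.2 (by nlinarith [norm_nonneg ξ])

lemma sqrt_le_eigenGap {r : ℝ} (h : ‖ξ‖ ≤ r) : √(1 - 4 * r ^ 2) ≤ eigenGap d ξ :=
  Real.sqrt_le_sqrt (by nlinarith [norm_nonneg ξ])

lemma norm_sq_eq_eigenGap (h : ‖ξ‖ ≤ 1 / 2) :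
    (‖ξ‖ : ℂ) ^ 2 = (1 - (eigenGap d ξ : ℂ) ^ 2) / 4 := by
  have hσ : eigenGap d ξ ^ 2 = 1 - 4 * ‖ξ‖ ^ 2 :=
    Real.sq_sqrt (by nlinarith [norm_nonneg ξ])
  have := congrArg (fun x : ℝ => (x : ℂ)) hσ
  push_cast at this
  linear_combination this / 4

lemma lamPlus_eq : lamPlus d ξ = (((-1 + eigenGap d ξ) / 2 : ℝ) : ℂ) := by
  simp [lamPlus, eigenGap]

lemma lamMinus_eq : lamMinus d ξ = (((-1 - eigenGap d ξ) / 2 : ℝ) : ℂ) := by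
  simp [lamMinus, eigenGap]

lemma eulerDampingSymbol_eq_xiMatrix : eulerDampingSymbol d ξ = xiMatrix d ξ 0 1 1 1 0 := by
  simp [eulerDampingSymbol, xiMatrix, iXiRow, iXiCol]

lemma Pi0_eq_xiMatrix : Pi0 d ξ = xiMatrix d ξ 0 0 0 1 (-1) := by
  simp [Pi0, xiMatrix, sub_eq_add_neg]

lemma lamPlus_sub_lamMinus : lamPlus d ξ - lamMinus d ξ = eigenGap d ξ := by
  simp only [lamPlus, lamMinus, eigenGap]
  ring

lemma PiPlus_eq_xiMatrix :
    PiPlus d ξ = xiMatrix d ξ (((1 + eigenGap d ξ) / (2 * eigenGap d ξ) : ℝ) : ℂ)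
      ((-1 / eigenGap d ξ : ℝ) : ℂ) ((-1 / eigenGap d ξ : ℝ) : ℂ) 0
      (((eigenGap d ξ - 1) / (2 * eigenGap d ξ) : ℝ) : ℂ) := by
  rw [PiPlus, lamPlus_sub_lamMinus, xiMatrix, fromBlocks_smul]
  congr 1 <;> ext <;>
    simp only [iXiRow, iXiCol, lamPlus_eq, lamMinus_eq, Matrix.smul_apply, Matrix.add_apply,
      of_apply, smul_eq_mul, Matrix.one_apply_eq, zero_mul, zero_add] <;> push_cast <;> ring

lemma PiMinus_eq_xiMatrix :
    PiMinus d ξ = xiMatrix d ξ (((eigenGap d ξ - 1) / (2 * eigenGap d ξ) : ℝ) : ℂ)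
      ((1 / eigenGap d ξ : ℝ) : ℂ) ((1 / eigenGap d ξ : ℝ) : ℂ) 0
      (((1 + eigenGap d ξ) / (2 * eigenGap d ξ) : ℝ) : ℂ) := by
  rw [PiMinus, lamPlus_sub_lamMinus, xiMatrix, fromBlocks_smul]
  congr 1 <;> ext <;>
    simp only [iXiRow, iXiCol, lamPlus_eq, lamMinus_eq, Matrix.smul_apply, Matrix.add_apply,
      of_apply, smul_eq_mul, Matrix.one_apply_eq, zero_mul, zero_add] <;> push_cast <;> ring

theorem completeOrthogonalIdempotents_eigenprojections (hξ : ξ ≠ 0) (h : ‖ξ‖ < 1 / 2) :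
    CompleteOrthogonalIdempotents ![PiPlus d ξ, PiMinus d ξ, Pi0 d ξ] := by
  have hσ : (eigenGap d ξ : ℂ) ≠ 0 := by exact_mod_cast (eigenGap_pos h).ne'
  rw [CompleteOrthogonalIdempotents.iff_ortho_complete, Fin.sum_univ_three, PiPlus_eq_xiMatrix,
    PiMinus_eq_xiMatrix, Pi0_eq_xiMatrix]
  refine ⟨fun i j hij => ?_, ?_⟩
  · rw [← xiMatrix_zero (d := d) (ξ := ξ)]
    fin_cases i <;> fin_cases j <;> (try exact absurd rfl hij) <;>
      simp only [Fin.zero_eta, Fin.mk_one, Fin.reduceFinMk, Matrix.cons_val, xiMatrix_mul hξ,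
        norm_sq_eq_eigenGap h.le] <;>
      congr 1 <;> push_cast <;> field_simp <;> ring
  · simp only [Matrix.cons_val, xiMatrix_add, ← xiMatrix_one (d := d) (ξ := ξ)]
    congr 1 <;> push_cast <;> field_simp <;> ring

lemma neg_smul_eulerDampingSymbol (h : ‖ξ‖ < 1 / 2) (t : ℂ) :
    -(t • eulerDampingSymbol d ξ) =
      (t * lamPlus d ξ) • PiPlus d ξ + (t * lamMinus d ξ) • PiMinus d ξ + (-t) • Pi0 d ξ := by
  have hσ : (eigenGap d ξ : ℂ) ≠ 0 := by exact_mod_cast (eigenGap_pos h).ne'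
  rw [eulerDampingSymbol_eq_xiMatrix, PiPlus_eq_xiMatrix, PiMinus_eq_xiMatrix, Pi0_eq_xiMatrix,
    lamPlus_eq, lamMinus_eq, ← neg_smul]
  simp only [smul_xiMatrix, xiMatrix_add]
  congr 1 <;> push_cast <;> field_simp <;> ring

theorem exp_neg_smul_eulerDampingSymbol (hξ : ξ ≠ 0) (h : ‖ξ‖ < 1 / 2) (t : ℂ) :
    exp (-(t • eulerDampingSymbol d ξ)) =
      Complex.exp (t * lamPlus d ξ) • PiPlus d ξ + Complex.exp (t * lamMinus d ξ) • PiMinus d ξ +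
        Complex.exp (-t) • Pi0 d ξ := by
  have := (completeOrthogonalIdempotents_eigenprojections hξ h).exp_sum_smul
    ![t * lamPlus d ξ, t * lamMinus d ξ, -t]
  simp only [Fin.sum_univ_three, Matrix.cons_val] at this
  rw [neg_smul_eulerDampingSymbol h, this, Complex.exp_eq_exp_ℂ]

lemma norm_xiProj_apply_le (i j : Fin d) : ‖xiProj d ξ i j‖ ≤ 1 := by
  simp only [xiProj, of_apply, norm_div, norm_mul, norm_pow, Complex.norm_real, norm_norm]
  refine div_le_one_of_le₀ ?_ (by positivity)
  rw [sq]
  exact mul_le_mul (PiLp.norm_apply_le ξ i) (PiLp.norm_apply_le ξ j) (norm_nonneg _)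
    (norm_nonneg _)

lemma norm_xiMatrix_apply_le (a b c e f : ℂ) (i j : Unit ⊕ Fin d) :
    ‖xiMatrix d ξ a b c e f i j‖ ≤ ‖a‖ + ‖b‖ * ‖ξ‖ + ‖c‖ * ‖ξ‖ + ‖e‖ + ‖f‖ := by
  have hcoord (k : Fin d) : ‖Complex.I * (ξ k : ℂ)‖ ≤ ‖ξ‖ := by
    simpa using PiLp.norm_apply_le ξ k
  have hone (k l : Fin d) : ‖(1 : Matrix (Fin d) (Fin d) ℂ) k l‖ ≤ 1 := by
    rw [Matrix.one_apply]; split_ifs <;> simp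
  have hb (k : Fin d) := mul_le_mul_of_nonneg_left (hcoord k) (norm_nonneg b)
  have hc (k : Fin d) := mul_le_mul_of_nonneg_left (hcoord k) (norm_nonneg c)
  have : 0 ≤ ‖b‖ * ‖ξ‖ := by positivity
  have : 0 ≤ ‖c‖ * ‖ξ‖ := by positivity
  have := norm_nonneg a; have := norm_nonneg e; have := norm_nonneg f
  rcases i with _ | i <;> rcases j with _ | j <;>
    simp only [xiMatrix, fromBlocks_apply₁₁, fromBlocks_apply₁₂, fromBlocks_apply₂₁,
      fromBlocks_apply₂₂, Matrix.smul_apply, Matrix.add_apply, smul_eq_mul, iXiRow, iXiCol,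
      of_apply, Matrix.one_apply_eq, mul_one]
  · linarith
  · linarith [norm_mul b (Complex.I * (ξ j : ℂ)), hb j]
  · linarith [norm_mul c (Complex.I * (ξ i : ℂ)), hc i]
  · have he := mul_le_mul_of_nonneg_left (hone i j) (norm_nonneg e)
    have hf := mul_le_mul_of_nonneg_left (norm_xiProj_apply_le (ξ := ξ) i j) (norm_nonneg f)
    linarith [norm_add_le (e * (1 : Matrix (Fin d) (Fin d) ℂ) i j) (f * xiProj d ξ i j),
      norm_mul e ((1 : Matrix (Fin d) (Fin d) ℂ) i j), norm_mul f (xiProj d ξ i j)]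

lemma eigenprojection_coeff_le (h : ‖ξ‖ < 1 / 2) :
    |(1 + eigenGap d ξ) / (2 * eigenGap d ξ)| + |1 / eigenGap d ξ| * ‖ξ‖ +
      |1 / eigenGap d ξ| * ‖ξ‖ + |(eigenGap d ξ - 1) / (2 * eigenGap d ξ)| ≤
      2 * (eigenGap d ξ)⁻¹ := by
  have hσ := eigenGap_pos h
  have hσ1 : eigenGap d ξ ≤ 1 := eigenGap_le_one
  rw [abs_of_nonneg (by positivity : 0 ≤ (1 + eigenGap d ξ) / (2 * eigenGap d ξ)),
    abs_of_pos (by positivity : 0 < 1 / eigenGap d ξ),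
    abs_of_nonpos (div_nonpos_of_nonpos_of_nonneg (by linarith) (by positivity) :
      (eigenGap d ξ - 1) / (2 * eigenGap d ξ) ≤ 0)]
  calc _ = (1 + 2 * ‖ξ‖) * (eigenGap d ξ)⁻¹ := by field_simp; ring
    _ ≤ 2 * (eigenGap d ξ)⁻¹ := by gcongr; linarith

lemma norm_PiPlus_apply_le (h : ‖ξ‖ < 1 / 2) (i j : Unit ⊕ Fin d) :
    ‖PiPlus d ξ i j‖ ≤ 2 * (eigenGap d ξ)⁻¹ := by
  rw [PiPlus_eq_xiMatrix]
  refine (norm_xiMatrix_apply_le _ _ _ _ _ i j).trans ?_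
  simp only [Complex.norm_real, Real.norm_eq_abs, norm_zero, neg_div, abs_neg]
  linarith [eigenprojection_coeff_le h]

lemma norm_PiMinus_apply_le (h : ‖ξ‖ < 1 / 2) (i j : Unit ⊕ Fin d) :
    ‖PiMinus d ξ i j‖ ≤ 2 * (eigenGap d ξ)⁻¹ := by
  rw [PiMinus_eq_xiMatrix]
  refine (norm_xiMatrix_apply_le _ _ _ _ _ i j).trans ?_
  simp only [Complex.norm_real, Real.norm_eq_abs, norm_zero]
  linarith [eigenprojection_coeff_le h]

lemma norm_Pi0_apply_le (i j : Unit ⊕ Fin d) : ‖Pi0 d ξ i j‖ ≤ 2 := by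
  rw [Pi0_eq_xiMatrix]
  refine (norm_xiMatrix_apply_le _ _ _ _ _ i j).trans_eq ?_
  norm_num

lemma norm_exp_neg_smul_eulerDampingSymbol_apply_le (hξ : ξ ≠ 0) (h : ‖ξ‖ < 1 / 2) {t : ℝ}
    (ht : 0 ≤ t) (i j : Unit ⊕ Fin d) :
    ‖exp (-((t : ℂ) • eulerDampingSymbol d ξ)) i j‖ ≤ 4 * (eigenGap d ξ)⁻¹ + 2 := by
  have hσ1 : eigenGap d ξ ≤ 1 := eigenGap_le_one
  have hplus : ‖Complex.exp (t * lamPlus d ξ)‖ ≤ 1 := by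
    rw [Complex.norm_exp, Real.exp_le_one_iff, lamPlus_eq, ← Complex.ofReal_mul, Complex.ofReal_re]
    nlinarith
  have hminus : ‖Complex.exp (t * lamMinus d ξ)‖ ≤ 1 := by
    rw [Complex.norm_exp, Real.exp_le_one_iff, lamMinus_eq, ← Complex.ofReal_mul,
      Complex.ofReal_re]
    nlinarith [eigenGap_pos h]
  have hzero : ‖Complex.exp (-t)‖ ≤ 1 := by
    rw [Complex.norm_exp, Real.exp_le_one_iff, Complex.neg_re, Complex.ofReal_re]
    linarith
  rw [exp_neg_smul_eulerDampingSymbol hξ h]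
  simp only [Matrix.add_apply, Matrix.smul_apply, smul_eq_mul]
  refine norm_add₃_le.trans ?_
  simp only [norm_mul]
  calc _ ≤ 1 * (2 * (eigenGap d ξ)⁻¹) + 1 * (2 * (eigenGap d ξ)⁻¹) + 1 * 2 := by
        gcongr
        exacts [norm_PiPlus_apply_le h i j, norm_PiMinus_apply_le h i j, norm_Pi0_apply_le i j]
    _ = 4 * (eigenGap d ξ)⁻¹ + 2 := by ring

end EulerDamping

theorem matrix_exponential_low_frequency_bound_general (d : ℕ) (rinf T : ℝ)
    (h0 : 0 < rinf) (h1 : rinf < 1 / 2) :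
    ∃ C : ℝ, 0 < C ∧
      ∀ ξ : EuclideanSpace ℝ (Fin d), 0 < ‖ξ‖ → ‖ξ‖ ≤ rinf →
        ∀ t : ℝ, t ∈ Set.Icc (0 : ℝ) T →
          (∀ i j, ‖NormedSpace.exp (-((t : ℂ) • eulerDampingSymbol d ξ)) i j‖ ≤ C) ∧
          NormedSpace.exp (-((t : ℂ) • eulerDampingSymbol d ξ)) =
            Complex.exp ((t : ℂ) * lamPlus d ξ) • PiPlus d ξ +
              Complex.exp ((t : ℂ) * lamMinus d ξ) • PiMinus d ξ +
              Complex.exp (-(t : ℂ)) • Pi0 d ξ ∧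
          (∀ i j, ‖PiPlus d ξ i j‖ ≤ C ∧ ‖PiMinus d ξ i j‖ ≤ C ∧ ‖Pi0 d ξ i j‖ ≤ C) := by
  set σ₀ := √(1 - 4 * rinf ^ 2)
  have hσ₀ : 0 < σ₀ := Real.sqrt_pos.2 (by nlinarith)
  have hσ₀1 : σ₀ ≤ 1 := Real.sqrt_le_one.2 (by nlinarith)
  refine ⟨6 * σ₀⁻¹, by positivity, fun ξ hξ hξr t ht => ?_⟩
  have hξ0 : ξ ≠ 0 := norm_pos_iff.1 hξ
  have h : ‖ξ‖ < 1 / 2 := hξr.trans_lt h1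
  have hgap : (eigenGap d ξ)⁻¹ ≤ σ₀⁻¹ := inv_anti₀ hσ₀ (sqrt_le_eigenGap hξr)
  have hone : 1 ≤ σ₀⁻¹ := one_le_inv₀ hσ₀ |>.2 hσ₀1
  refine ⟨fun i j => ?_, exp_neg_smul_eulerDampingSymbol hξ0 h t, fun i j => ⟨?_, ?_, ?_⟩⟩
  · linarith [norm_exp_neg_smul_eulerDampingSymbol_apply_le hξ0 h ht.1 i j]
  · linarith [norm_PiPlus_apply_le h i j]
  · linarith [norm_PiMinus_apply_le h i j]
  · linarith [norm_Pi0_apply_le (ξ := ξ) i j]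

/-- For `0 < r_∞ < 1/2`, the matrix exponential `e^{−tÂ_ξ}` is bounded uniformly
for `0 < |ξ| ≤ r_∞` and `t ∈ [0,T]`, and it admits the spectral resolution
`e^{−tÂ_ξ} = e^{tλ₊}Π₊ + e^{tλ₋}Π₋ + e^{−t}Π₀` with uniformly bounded projections. -/
theorem matrix_exponential_low_frequency_bound (d : ℕ) (rinf T : ℝ)
    (h0 : 0 < rinf) (h1 : rinf < 1 / 2) (hT : 0 ≤ T) :
    ∃ C : ℝ, 0 < C ∧
      ∀ ξ : EuclideanSpace ℝ (Fin d), 0 < ‖ξ‖ → ‖ξ‖ ≤ rinf →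
        ∀ t : ℝ, t ∈ Set.Icc (0 : ℝ) T →
          (∀ i j, ‖NormedSpace.exp (-((t : ℂ) • eulerDampingSymbol d ξ)) i j‖ ≤ C) ∧
          NormedSpace.exp (-((t : ℂ) • eulerDampingSymbol d ξ)) =
            Complex.exp ((t : ℂ) * lamPlus d ξ) • PiPlus d ξ +
              Complex.exp ((t : ℂ) * lamMinus d ξ) • PiMinus d ξ +
              Complex.exp (-(t : ℂ)) • Pi0 d ξ ∧
          (∀ i j, ‖PiPlus d ξ i j‖ ≤ C ∧ ‖PiMinus d ξ i j‖ ≤ C ∧ ‖Pi0 d ξ i j‖ ≤ C) :=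
  matrix_exponential_low_frequency_bound_general d rinf T h0 h1
end
end
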